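/- arXiv:2303.15535 — 2 statements merged into one kernel-verified Lean document; each statement's English description precedes it below -/
import Mathlib

section
/- If a continuous semiflow on a smooth Riemannian manifold M admits a proper continuous function V : M → ℝ and a subset S ⊆ M such that V(S) is nowhere dense in ℝ and V is strictly decreasing along trajectories outside S, then the chain recurrent set of the semiflow is contained in S. -/
/-- An autonomous continuous semiflow on a metric space. -/
structure Semiflow (M : Type*) [MetricSpace M] where
  toFun : ℝ → M → M
  cont : Continuous fun p : ℝ × M => toFun p.1 p.2
  map_zero : ∀ x, toFun 0 x = x
  map_add : ∀ {s t : ℝ}, 0 ≤ s → 0 ≤ t → ∀ x, toFun t (toFun s x) = toFun (t + s) x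

/-- A closed `(ε, T)`-chain at `x`. -/
def Semiflow.IsChain {M : Type*} [MetricSpace M] (Φ : Semiflow M) (ε T : ℝ) (x : M) : Prop :=
  ∃ (n : ℕ) (xs : Fin (n + 1) → M) (ts : Fin n → ℝ),
    0 < n ∧ xs 0 = x ∧ xs (Fin.last n) = x ∧
    ∀ i : Fin n, T < ts i ∧ dist (Φ.toFun (ts i) (xs i.castSucc)) (xs i.succ) < ε

/-- The chain recurrent set of a semiflow. -/
def Semiflow.chainRecurrentSet {M : Type*} [MetricSpace M] (Φ : Semiflow M) : Set M :=
  {x | ∀ ε T : ℝ, 0 < ε → 0 < T → Φ.IsChain ε T x}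

/-- The equilibrium set of a semiflow. -/
def Semiflow.equilibria {M : Type*} [MetricSpace M] (Φ : Semiflow M) : Set M :=
  {x | ∀ t : ℝ, 0 ≤ t → Φ.toFun t x = x}

/-!
Suppose `x ∉ S`. Then `V (Φ 1 x) < V x`, and since `V '' S` is nowhere dense there is a band
`[b₁, b₂] ⊆ (V (Φ 1 x), V x)` of values missing `V '' S`. A sublevel set `{V ≤ b}` with
`b ∉ V '' S` is forward invariant, and on the compact band `{b₁ ≤ V ≤ b₂}`, which misses `S`,
`V` drops by a uniform amount per unit time. Hence after a fixed time `N` the flow carries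
`{V ≤ b₂}` into `{V ≤ b₁}`, whose `ε`-neighbourhood for some `ε > 0` still lies in `{V < b₂}`.
So every `(ε, N + 1)`-chain from `x` stays in `{V ≤ b₂}` after its first jump and cannot return
to `x`.
-/

open Set

lemma IsNowhereDense.exists_Icc_subset_Ioo_disjoint {α : Type*} [LinearOrder α]
    [TopologicalSpace α] [OrderTopology α] [DenselyOrdered α] {s : Set α}
    (hs : IsNowhereDense s) {a b : α} (hab : a < b) :
    ∃ c d, c < d ∧ Icc c d ⊆ Ioo a b ∧ Disjoint (Icc c d) s := by
  have : Nontrivial α := ⟨⟨a, b, hab.ne⟩⟩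
  have hne : (Ioo a b \ closure s).Nonempty := by
    refine nonempty_iff_ne_empty.2 fun h => ?_
    have hsub : Ioo a b ⊆ interior (closure s) :=
      isOpen_Ioo.subset_interior_iff.2 (sdiff_eq_empty.1 h)
    rw [hs] at hsub
    exact (nonempty_Ioo.2 hab).ne_empty (subset_empty_iff.1 hsub)
  obtain ⟨a', b', hab', hsub⟩ := (isOpen_Ioo.sdiff isClosed_closure).exists_Ioo_subset hne
  obtain ⟨c, hac, hcb⟩ := exists_between hab'
  obtain ⟨d, hcd, hdb⟩ := exists_between hcb
  have hIcc : Icc c d ⊆ Ioo a b \ closure s := (Icc_subset_Ioo hac hdb).trans hsub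
  exact ⟨c, d, hcd, hIcc.trans sdiff_subset,
    disjoint_left.2 fun y hy hys => (hIcc hy).2 (subset_closure hys)⟩

lemma IsCompact.exists_pos_forall_le_neg {X : Type*} [TopologicalSpace X] {K : Set X}
    (hK : IsCompact K) {f : X → ℝ} (hf : ContinuousOn f K) (hneg : ∀ x ∈ K, f x < 0) :
    ∃ δ > 0, ∀ x ∈ K, f x ≤ -δ := by
  rcases K.eq_empty_or_nonempty with rfl | hne
  · exact ⟨1, one_pos, by simp⟩
  obtain ⟨x₀, hx₀, hmax⟩ := hK.exists_isMaxOn hne hf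
  exact ⟨-f x₀, neg_pos.2 (hneg x₀ hx₀), fun x hx => by simpa using hmax hx⟩

lemma apply_iterate_le_max_sub_mul {α : Type*} {f : α → α} {V : α → ℝ} {b₁ b₂ δ : ℝ}
    (hδ : 0 ≤ δ) (hinv : ∀ y, V y ≤ b₁ → V (f y) ≤ b₁)
    (hband : ∀ y, b₁ < V y → V y ≤ b₂ → V (f y) ≤ V y - δ) {y : α} (hy : V y ≤ b₂) (m : ℕ) :
    V (f^[m] y) ≤ max b₁ (b₂ - m * δ) := by
  induction m with
  | zero => simpa using Or.inr hy
  | succ m ih =>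
    rw [Function.iterate_succ_apply']
    rcases le_or_gt (V (f^[m] y)) b₁ with hlow | hlow
    · exact le_max_of_le_left (hinv _ hlow)
    · have hle : V (f^[m] y) ≤ b₂ - m * δ := (le_max_iff.1 ih).resolve_left hlow.not_ge
      have hstep := hband _ hlow (hle.trans (by nlinarith [m.cast_nonneg (α := ℝ)]))
      push_cast
      exact le_max_of_le_right (by linarith)

namespace Semiflow

variable {M : Type*} [MetricSpace M] (Φ : Semiflow M)

lemma continuous_orbit (y : M) : Continuous fun t => Φ.toFun t y :=
  Φ.cont.comp (continuous_id.prodMk continuous_const)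

lemma continuous_toFun (t : ℝ) : Continuous (Φ.toFun t) :=
  Φ.cont.comp (continuous_const.prodMk continuous_id)

lemma toFun_sub_toFun {s t : ℝ} (hs : 0 ≤ s) (hst : s ≤ t) (y : M) :
    Φ.toFun (t - s) (Φ.toFun s y) = Φ.toFun t y := by
  rw [Φ.map_add hs (sub_nonneg.2 hst), sub_add_cancel]

lemma toFun_natCast (n : ℕ) : Φ.toFun n = (Φ.toFun 1)^[n] := by
  induction n with
  | zero => funext y; simp [Φ.map_zero]
  | succ n ih =>
    funext y
    rw [Function.iterate_succ_apply', ← ih, Φ.map_add n.cast_nonneg zero_le_one]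
    push_cast
    ring_nf

variable {V : M → ℝ} {S : Set M}

lemma mapsTo_sublevel (hV : Continuous V)
    (hdec : ∀ x ∉ S, ∀ t : ℝ, 0 < t → V (Φ.toFun t x) < V x)
    {c : ℝ} (hc : c ∉ V '' S) {t : ℝ} (ht : 0 ≤ t) :
    MapsTo (Φ.toFun t) {y | V y ≤ c} {y | V y ≤ c} := by
  intro y (hy : V y ≤ c)
  show V _ ≤ c
  by_contra! hcross
  -- The orbit crosses the level `c` at a point outside `S`, after which `V` drops below `c`.
  have hIVT := intermediate_value_Icc ht (hV.comp (Φ.continuous_orbit y)).continuousOn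
  obtain ⟨s, ⟨hs0, hst⟩, hs : V (Φ.toFun s y) = c⟩ :=
    hIVT ⟨by simpa [Φ.map_zero] using hy, hcross.le⟩
  have hsS : Φ.toFun s y ∉ S := fun h => hc ⟨_, h, hs⟩
  have hst' : s < t := hst.lt_of_ne (by rintro rfl; exact hcross.ne' hs)
  have hdrop := hdec _ hsS (t - s) (sub_pos.2 hst')
  rw [Φ.toFun_sub_toFun hs0 hst, hs] at hdrop
  exact hcross.not_gt hdrop

lemma exists_mapsTo_sublevel_of_disjoint (hV : Continuous V)
    (hdec : ∀ x ∉ S, ∀ t : ℝ, 0 < t → V (Φ.toFun t x) < V x) {b₁ b₂ : ℝ} (hb : b₁ ≤ b₂)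
    (hdisj : Disjoint (Icc b₁ b₂) (V '' S)) (hcpt : IsCompact {y | V y ≤ b₂}) :
    ∃ N : ℕ, ∀ t : ℝ, N ≤ t → MapsTo (Φ.toFun t) {y | V y ≤ b₂} {y | V y ≤ b₁} := by
  have hb₁ : b₁ ∉ V '' S := disjoint_left.1 hdisj ⟨le_rfl, hb⟩
  have hband : IsCompact (V ⁻¹' Icc b₁ b₂) :=
    hcpt.of_isClosed_subset (isClosed_Icc.preimage hV) fun y hy => hy.2
  have hbandS : ∀ y ∈ V ⁻¹' Icc b₁ b₂, y ∉ S := fun y hy hyS =>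
    disjoint_left.1 hdisj hy ⟨y, hyS, rfl⟩
  obtain ⟨δ, hδ, hdrop⟩ := hband.exists_pos_forall_le_neg
    (f := fun y => V (Φ.toFun 1 y) - V y) ((hV.comp (Φ.continuous_toFun 1)).sub hV).continuousOn
    fun y hy => sub_neg.2 (hdec y (hbandS y hy) 1 one_pos)
  obtain ⟨N, hN⟩ := Archimedean.arch (b₂ - b₁) hδ
  refine ⟨N, fun t ht y hy => ?_⟩
  have hyN : V (Φ.toFun N y) ≤ b₁ := by
    have hinv : ∀ z, V z ≤ b₁ → V (Φ.toFun 1 z) ≤ b₁ := fun z hz =>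
      Φ.mapsTo_sublevel hV hdec hb₁ zero_le_one hz
    have hstep : ∀ z, b₁ < V z → V z ≤ b₂ → V (Φ.toFun 1 z) ≤ V z - δ := fun z hz₁ hz₂ => by
      linarith [hdrop z ⟨hz₁.le, hz₂⟩]
    rw [Φ.toFun_natCast]
    refine (apply_iterate_le_max_sub_mul hδ.le hinv hstep hy N).trans (max_le le_rfl ?_)
    rw [nsmul_eq_mul] at hN
    linarith
  rw [← Φ.toFun_sub_toFun N.cast_nonneg ht]
  exact Φ.mapsTo_sublevel hV hdec hb₁ (sub_nonneg.2 ht) hyN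

variable {Φ} in
lemma IsChain.mem_of_forall_dist_lt {ε T : ℝ} {x : M} {A : Set M}
    (hA : ∀ y ∈ insert x A, ∀ t, T < t → ∀ z, dist (Φ.toFun t y) z < ε → z ∈ A)
    (h : Φ.IsChain ε T x) : x ∈ A := by
  obtain ⟨n, xs, ts, hn, hx0, hlast, hstep⟩ := h
  have hall : ∀ i : Fin (n + 1), xs i ∈ insert x A := by
    refine Fin.induction (hx0 ▸ mem_insert x A) fun i hi => Or.inr ?_
    exact hA _ hi _ (hstep i).1 _ (hstep i).2
  obtain ⟨m, rfl⟩ := Nat.exists_eq_add_one_of_ne_zero hn.ne'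
  rw [← hlast, ← Fin.succ_last]
  exact hA _ (hall _) _ (hstep _).1 _ (hstep _).2

end Semiflow

/-- If a continuous semiflow on `M` admits a proper continuous function
`V : M → ℝ` and a subset `S ⊆ M` such that `V '' S` is nowhere dense in `ℝ` and `V` is
strictly decreasing along trajectories outside `S`, then the chain recurrent set is
contained in `S`. -/
theorem chainRecurrentSet_subset_of_decreasing_outside
    {M : Type*} [MetricSpace M] (Φ : Semiflow M) (V : M → ℝ) (S : Set M)
    (hVcont : Continuous V)
    (hVproper : ∀ c : ℝ, IsCompact {x : M | V x ≤ c})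
    (hnd : IsNowhereDense (V '' S))
    (hdec : ∀ x ∉ S, ∀ t : ℝ, 0 < t → V (Φ.toFun t x) < V x) :
    Φ.chainRecurrentSet ⊆ S := by
  intro x hx
  by_contra hxS
  obtain ⟨b₁, b₂, hb, hband, hdisj⟩ :=
    hnd.exists_Icc_subset_Ioo_disjoint (hdec x hxS 1 one_pos)
  have hx₁ : V (Φ.toFun 1 x) < b₁ := (hband ⟨le_rfl, hb.le⟩).1
  have hxb₂ : b₂ < V x := (hband ⟨hb.le, le_rfl⟩).2
  obtain ⟨N, hN⟩ := Φ.exists_mapsTo_sublevel_of_disjoint hVcont hdec hb.le hdisj (hVproper b₂)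
  obtain ⟨ε, hε, hthick⟩ := (hVproper b₁).exists_thickening_subset_open
    (isOpen_lt hVcont continuous_const) fun y (hy : V y ≤ b₁) => hy.trans_lt hb
  have hxA : x ∈ {y | V y ≤ b₂} := by
    refine (hx ε (N + 1) hε (by positivity)).mem_of_forall_dist_lt fun y hy t ht z hz => ?_
    have hflow : V (Φ.toFun t y) ≤ b₁ := by
      rcases hy with rfl | hy
      · rw [← Φ.toFun_sub_toFun zero_le_one (by linarith [N.cast_nonneg (α := ℝ)])]
        exact hN (t - 1) (by linarith) (hx₁.le.trans hb.le)
      · exact hN t (by linarith) hy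
    have hz' : z ∈ Metric.thickening ε {y | V y ≤ b₁} :=
      Metric.mem_thickening_iff.2 ⟨_, hflow, by rwa [dist_comm]⟩
    exact (show V z < b₂ from hthick hz').le
  exact hxb₂.not_ge hxA
end

section
/- Consider the cascade x' = f(x,y), y' = g(y) with interconnection term h(x,y) = f(x,y) − f(x,0_Y). Suppose W : X → ℝ≥0 is a proper differentiable Lyapunov function for x' = f(x,0_Y) (i.e., L_{f(x,0_Y)} W ≤ 0), and along a fixed trajectory (x(t), y(t)) there exist constants A, B, ω > 0 and c ∈ ℝ such that L_{h(x,y(t))} W(x) ≤ A e^{-ωt} W(x) + B e^{-ωt} whenever W(x) ≥ c. Then W(x(t)) ≤ (max{c, W(x(0))} + B/ω) e^{A/ω} for all t ≥ 0; in particular W(x(t)) is bounded. -/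
/-!
Let `t₀ ≤ t` be the last time in `[0, t]` at which `W (x t₀) ≤ c` (or `t₀ = 0` if there is none).
On `(t₀, t)` the Lyapunov hypothesis reduces `d/ds W (x s)` to the interconnection term, so
`u s = W (x s)` satisfies `u' ≤ A e^{-ωs} u + B e^{-ωs}`. The integrating factor
`exp (A/ω · e^{-ωs})`, which lies between `1` and `e^{A/ω}`, makes
`u s · exp (A/ω · e^{-ωs}) + (B/ω) e^{A/ω} e^{-ωs}` nonincreasing, and comparing its values at `t₀`
and `t` gives the bound.
-/

open Set Real

theorem exists_last_le_of_continuousOn {u : ℝ → ℝ} {a b c M : ℝ} (hab : a ≤ b)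
    (hu : ContinuousOn u (Icc a b)) (hua : u a ≤ M) (hcM : c ≤ M) :
    ∃ t₀ ∈ Icc a b, u t₀ ≤ M ∧ ∀ s ∈ Ioo t₀ b, c < u s := by
  set S := insert a (Icc a b ∩ u ⁻¹' Iic c)
  have hS : IsCompact S :=
    (isCompact_Icc.of_isClosed_subset (hu.preimage_isClosed_of_isClosed isClosed_Icc isClosed_Iic)
      inter_subset_left).insert a
  have hSmem := hS.sSup_mem (insert_nonempty _ _)
  have hSIcc : S ⊆ Icc a b := insert_subset (left_mem_Icc.2 hab) inter_subset_left
  refine ⟨sSup S, hSIcc hSmem, ?_, fun s hs => ?_⟩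
  · rcases hSmem with h | h
    · rwa [h]
    · exact h.2.trans hcM
  · by_contra! hsc
    have hsS : s ∈ S := .inr ⟨⟨(hSIcc hSmem).1.trans hs.1.le, hs.2.le⟩, hsc⟩
    exact (le_csSup hS.bddAbove hsS).not_gt hs.1

section ExpDecayingGrowth

variable {u u' : ℝ → ℝ} {A B ω a b : ℝ}

theorem antitoneOn_of_deriv_le_exp_decay (hA : 0 ≤ A) (hB : 0 ≤ B) (hω : 0 < ω) (ha : 0 ≤ a)
    (hu : ContinuousOn u (Icc a b)) (hu' : ∀ t ∈ Ioo a b, HasDerivAt u (u' t) t)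
    (hgrowth : ∀ t ∈ Ioo a b, u' t ≤ A * exp (-ω * t) * u t + B * exp (-ω * t)) :
    AntitoneOn (fun t => u t * exp (A / ω * exp (-ω * t)) + B / ω * exp (A / ω) * exp (-ω * t))
      (Icc a b) := by
  have hE : ∀ t, HasDerivAt (fun t => exp (-ω * t)) (-ω * exp (-ω * t)) t := fun t => by
    simpa [mul_comm] using ((hasDerivAt_id t).const_mul (-ω)).exp
  refine antitoneOn_of_hasDerivWithinAt_nonpos (convex_Icc a b) ?_ (fun t ht => ?_) (fun t ht => ?_)
    (f' := fun t => u' t * exp (A / ω * exp (-ω * t))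
      - A * exp (-ω * t) * u t * exp (A / ω * exp (-ω * t)) - B * exp (A / ω) * exp (-ω * t))
  · exact (hu.mul (by fun_prop)).add (by fun_prop)
  · rw [interior_Icc] at ht ⊢
    refine (((hu' t ht).mul ((hE t).const_mul (A / ω)).exp).add
      ((hE t).const_mul (B / ω * exp (A / ω)))).hasDerivWithinAt.congr_deriv ?_
    field_simp
    ring
  · rw [interior_Icc] at ht
    have hE1 : exp (-ω * t) ≤ 1 := exp_le_one_iff.2 (by nlinarith [ht.1])
    have hΦ : exp (A / ω * exp (-ω * t)) ≤ exp (A / ω) :=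
      exp_le_exp.2 (mul_le_of_le_one_right (by positivity) hE1)
    have hgrowthΦ := mul_le_mul_of_nonneg_right (hgrowth t ht) (exp_pos (A / ω * exp (-ω * t))).le
    have hBΦ := mul_le_mul_of_nonneg_left hΦ (by positivity : 0 ≤ B * exp (-ω * t))
    nlinarith

theorem le_of_deriv_le_exp_decay (hA : 0 ≤ A) (hB : 0 ≤ B) (hω : 0 < ω) (ha : 0 ≤ a)
    (hab : a ≤ b) (hu : ContinuousOn u (Icc a b)) (hu' : ∀ t ∈ Ioo a b, HasDerivAt u (u' t) t)
    (hgrowth : ∀ t ∈ Ioo a b, u' t ≤ A * exp (-ω * t) * u t + B * exp (-ω * t))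
    (hua : 0 ≤ u a) (hub : 0 ≤ u b) :
    u b ≤ (u a + B / ω) * exp (A / ω) := by
  have hanti := antitoneOn_of_deriv_le_exp_decay hA hB hω ha hu hu' hgrowth
    (left_mem_Icc.2 hab) (right_mem_Icc.2 hab) hab
  have hEa : exp (-ω * a) ≤ 1 := exp_le_one_iff.2 (by nlinarith)
  have hΦa : exp (A / ω * exp (-ω * a)) ≤ exp (A / ω) :=
    exp_le_exp.2 (mul_le_of_le_one_right (by positivity) hEa)
  have hΦb : 1 ≤ exp (A / ω * exp (-ω * b)) := one_le_exp (by positivity)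
  have huΦa := mul_le_mul_of_nonneg_left hΦa hua
  have hBEa := mul_le_mul_of_nonneg_left hEa (by positivity : 0 ≤ B / ω * exp (A / ω))
  have hBEb : 0 ≤ B / ω * exp (A / ω) * exp (-ω * b) := by positivity
  nlinarith

end ExpDecayingGrowth

theorem cascade_energy_bound_general
    {X Y : Type*} [NormedAddCommGroup X] [NormedSpace ℝ X]
    (f : X → Y → X) (y₀ : Y)
    (W : X → ℝ) (hW : Differentiable ℝ W) (hWnonneg : ∀ z : X, 0 ≤ W z)
    (hLyap : ∀ z : X, fderiv ℝ W z (f z y₀) ≤ 0)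
    (x : ℝ → X) (y : ℝ → Y)
    (hx : ∀ t : ℝ, 0 ≤ t → HasDerivAt x (f (x t) (y t)) t)
    (A B ω c : ℝ) (hA : 0 < A) (hB : 0 < B) (hω : 0 < ω)
    (hgrow : ∀ t : ℝ, 0 ≤ t → ∀ z : X, c ≤ W z →
      fderiv ℝ W z (f z (y t) - f z y₀)
        ≤ A * Real.exp (-ω * t) * W z + B * Real.exp (-ω * t)) :
    ∀ t : ℝ, 0 ≤ t → W (x t) ≤ (max c (W (x 0)) + B / ω) * Real.exp (A / ω) := by
  intro T hT
  have hWx : ∀ t, 0 ≤ t → HasDerivAt (fun s => W (x s)) (fderiv ℝ W (x t) (f (x t) (y t))) t :=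
    fun t ht => (hW (x t)).hasFDerivAt.comp_hasDerivAt t (hx t ht)
  have hcont : ∀ a, 0 ≤ a → ContinuousOn (fun s => W (x s)) (Icc a T) := fun a ha t ht =>
    (hWx t (ha.trans ht.1)).continuousAt.continuousWithinAt
  obtain ⟨t₀, ⟨ht₀, ht₀T⟩, hWt₀, hc⟩ := exists_last_le_of_continuousOn hT (hcont 0 le_rfl)
    (le_max_right c (W (x 0))) (le_max_left c (W (x 0)))
  have hgrowth : ∀ t ∈ Ioo t₀ T, fderiv ℝ W (x t) (f (x t) (y t))
      ≤ A * exp (-ω * t) * W (x t) + B * exp (-ω * t) := by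
    intro t ht
    have hsplit : fderiv ℝ W (x t) (f (x t) (y t))
        = fderiv ℝ W (x t) (f (x t) y₀) + fderiv ℝ W (x t) (f (x t) (y t) - f (x t) y₀) := by
      rw [map_sub]; ring
    linarith [hLyap (x t), hgrow t (ht₀.trans ht.1.le) (x t) (hc t ht).le]
  calc W (x T) ≤ (W (x t₀) + B / ω) * exp (A / ω) :=
        le_of_deriv_le_exp_decay hA.le hB.le hω ht₀ ht₀T (hcont t₀ ht₀)
          (fun t ht => hWx t (ht₀.trans ht.1.le)) hgrowth (hWnonneg _) (hWnonneg _)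
    _ ≤ (max c (W (x 0)) + B / ω) * exp (A / ω) := by gcongr

/-- Consider the cascade `x' = f(x,y)`, `y' = g(y)` with interconnection
term `h(x,y) = f(x,y) − f(x, y₀)`. If `W` is a proper differentiable nonnegative Lyapunov
function for the unforced system `x' = f(x, y₀)` (i.e. `L_{f(x,y₀)} W ≤ 0`) and, along a
fixed trajectory `(x(t), y(t))`, there are constants `A, B, ω > 0` and `c ∈ ℝ` with
`L_{h(x, y(t))} W(x) ≤ A e^{-ωt} W(x) + B e^{-ωt}` whenever `W(x) ≥ c`, then
`W(x(t)) ≤ (max{c, W(x(0))} + B/ω) e^{A/ω}` for all `t ≥ 0`; in particular `W(x(t))` is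
bounded. -/
theorem cascade_energy_bound
    {X Y : Type*} [NormedAddCommGroup X] [NormedSpace ℝ X]
    (f : X → Y → X) (y₀ : Y)
    (W : X → ℝ) (hW : Differentiable ℝ W) (hWnonneg : ∀ z : X, 0 ≤ W z)
    (hproper : ∀ r : ℝ, IsCompact {z : X | W z ≤ r})
    (hLyap : ∀ z : X, fderiv ℝ W z (f z y₀) ≤ 0)
    (x : ℝ → X) (y : ℝ → Y)
    (hx : ∀ t : ℝ, 0 ≤ t → HasDerivAt x (f (x t) (y t)) t)
    (A B ω c : ℝ) (hA : 0 < A) (hB : 0 < B) (hω : 0 < ω)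
    (hgrow : ∀ t : ℝ, 0 ≤ t → ∀ z : X, c ≤ W z →
      fderiv ℝ W z (f z (y t) - f z y₀)
        ≤ A * Real.exp (-ω * t) * W z + B * Real.exp (-ω * t)) :
    ∀ t : ℝ, 0 ≤ t → W (x t) ≤ (max c (W (x 0)) + B / ω) * Real.exp (A / ω) :=
  cascade_energy_bound_general f y₀ W hW hWnonneg hLyap x y hx A B ω c hA hB hω hgrow
end
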